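/- Let p1 be a primitive polynomial of degree k1 over GF(2) and p2 a primitive polynomial of degree k2 over GF(2) with p1 ≠ p2, and let n ≥ 2·max(k1,k2). Then the truncated PR codes S(p1,n) and S(p2,n) have no nonzero codeword in common, i.e., S(p1,n) ∩ S(p2,n) = {0}. -/

import Mathlib

/-- The truncated primitive rateless (PR) code `S(p,n)` for a polynomial `p` of degree `k`
over `GF(2)`: the set of vectors `c ∈ GF(2)^n` satisfying the linear recurrence
`∑_{i=0}^k p_i c_{j+i} = 0` for every `j` with `0 ≤ j ≤ n - k - 1`. -/
def PRcode (k : ℕ) (p : Polynomial (ZMod 2)) (n : ℕ) : Set (Fin n → ZMod 2) :=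
  {c | ∀ j : ℕ, j + k < n →
    ∑ i ∈ Finset.range (k + 1), p.coeff i * (if h : j + i < n then c ⟨j + i, h⟩ else 0) = 0}

/-- `p` is a primitive polynomial of degree `k` over `GF(2)`: it is the minimal polynomial of
some element `α` of `GF(2^k)` of multiplicative order `2^k - 1`. -/
def IsPrimitivePoly (k : ℕ) (p : Polynomial (ZMod 2)) : Prop :=
  ∃ α : GaloisField 2 k, orderOf α = 2 ^ k - 1 ∧ p = minpoly (ZMod 2) α

/-!
Reverse a common codeword `c` into the polynomial `f = ∑ cₙ₋₁₋ᵢ Xⁱ` of degree `< n`; the recurrence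
at position `j` is then the coefficient of `X^(n-1-j)` in `p f`. So membership in `S(pᵢ, n)` says
`pᵢ f ≡ aᵢ (mod Xⁿ)` with `deg aᵢ < kᵢ`. Hence `p₂ a₁ ≡ p₁ a₂ (mod Xⁿ)`, and as both sides have
degree `< k₁ + k₂ ≤ n`, `p₂ a₁ = p₁ a₂`. Distinct primitive polynomials are coprime, so `p₁ ∣ a₁`
and `a₁ = 0` by degree. Thus `Xⁿ ∣ p₁ f`, and `p₁(0) ≠ 0` gives `Xⁿ ∣ f`, i.e. `f = 0`.
A primitive element generates `GF(2^k)`, so its minimal polynomial has degree exactly `k`.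
-/

open Polynomial IntermediateField

namespace Polynomial

section CommRing

variable {R : Type*} [CommRing R]

theorem exists_degree_lt_and_X_pow_dvd_sub {g : R[X]} {k n : ℕ}
    (hg : ∀ m, k ≤ m → m < n → g.coeff m = 0) :
    ∃ a : R[X], a.degree < k ∧ X ^ n ∣ g - a := by
  classical
  refine ⟨ofFn k (toFn k g), ofFn_degree_lt _, X_pow_dvd_iff.2 fun m hm => ?_⟩
  rw [coeff_sub, sub_eq_zero]
  rcases lt_or_ge m k with hmk | hkm
  · simp [hmk, toFn]
  · rw [ofFn_coeff_eq_zero_of_ge _ hkm, hg m hkm hm]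

theorem degree_mul_lt_of_degree_lt {p a : R[X]} {k : ℕ} (ha : a.degree < k) :
    (p * a).degree < (p.natDegree + k : ℕ) := by
  rcases eq_or_ne a 0 with rfl | ha0
  · simp
  · have := (natDegree_lt_iff_degree_lt ha0).2 ha
    exact degree_le_natDegree.trans_lt (Nat.cast_lt.2 (natDegree_mul_le.trans_lt (by omega)))

end CommRing

section Field

variable {K : Type*} [Field K]

theorem isCoprime_X_pow_of_coeff_zero_ne_zero {p : K[X]} (hp : p.coeff 0 ≠ 0) (n : ℕ) :
    IsCoprime p (X ^ n) :=
  ((irreducible_X.coprime_iff_not_dvd.2 (X_dvd_iff.not.2 hp)).symm).pow_right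

theorem Monic.isCoprime_of_irreducible_of_ne {p q : K[X]} (hpm : p.Monic) (hqm : q.Monic)
    (hp : Irreducible p) (hq : Irreducible q) (hne : p ≠ q) : IsCoprime p q :=
  hp.coprime_iff_not_dvd.2 fun hdvd =>
    hne (eq_of_monic_of_associated hpm hqm (hp.associated_of_dvd hq hdvd))

theorem eq_zero_of_coeff_mul_eq_zero_of_isCoprime {p q f : K[X]} {n : ℕ}
    (hpq : IsCoprime p q) (hp0 : p.coeff 0 ≠ 0) (hn : p.natDegree + q.natDegree ≤ n)
    (hf : f.degree < n) (hpf : ∀ m, p.natDegree ≤ m → m < n → (p * f).coeff m = 0)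
    (hqf : ∀ m, q.natDegree ≤ m → m < n → (q * f).coeff m = 0) : f = 0 := by
  obtain ⟨a, ha, hpa⟩ := exists_degree_lt_and_X_pow_dvd_sub hpf
  obtain ⟨b, hb, hqb⟩ := exists_degree_lt_and_X_pow_dvd_sub hqf
  have hX : X ^ n ∣ q * a - p * b := by
    convert dvd_sub (dvd_mul_of_dvd_right hqb p) (dvd_mul_of_dvd_right hpa q) using 1
    ring
  have hlt : (q * a - p * b).degree < (X ^ n : K[X]).degree := by
    rw [degree_X_pow]
    refine (degree_sub_le _ _).trans_lt (max_lt ?_ ?_)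
    · exact (degree_mul_lt_of_degree_lt ha).trans_le (Nat.cast_le.2 (by omega))
    · exact (degree_mul_lt_of_degree_lt hb).trans_le (Nat.cast_le.2 (by omega))
  have hab : q * a = p * b := sub_eq_zero.1 (eq_zero_of_dvd_of_degree_lt hX hlt)
  have hp : p ≠ 0 := fun h => hp0 (by simp [h])
  have ha0 : a = 0 := eq_zero_of_dvd_of_degree_lt (hpq.dvd_of_dvd_mul_left ⟨b, hab⟩)
    (by rwa [degree_eq_natDegree hp])
  rw [ha0, sub_zero] at hpa
  exact eq_zero_of_dvd_of_degree_lt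
    ((isCoprime_X_pow_of_coeff_zero_ne_zero hp0 n).symm.dvd_of_dvd_mul_left hpa)
    (by rwa [degree_X_pow])

end Field

end Polynomial

theorem IntermediateField.adjoin_simple_eq_top_of_orderOf_eq {F E : Type*} [Field F] [Field E]
    [Algebra F E] [Finite E] {α : E} (h : orderOf α = Nat.card E - 1) : F⟮α⟯ = ⊤ := by
  have hα : α ≠ 0 := by
    rintro rfl
    have := Finite.one_lt_card (α := E)
    rw [orderOf_zero] at h
    omega
  have htop : Subgroup.zpowers (Units.mk0 α hα) = ⊤ := Subgroup.eq_top_of_card_eq _ (by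
    rw [Nat.card_zpowers, ← orderOf_units, Units.val_mk0, h, Nat.card_units])
  refine eq_top_iff.2 fun x _ => ?_
  rcases eq_or_ne x 0 with rfl | hx
  · exact zero_mem _
  obtain ⟨m, hm⟩ := Subgroup.mem_zpowers_iff.1 (htop ▸ Subgroup.mem_top (Units.mk0 x hx))
  have hxm : α ^ m = x := by simpa using congrArg Units.val hm
  exact hxm ▸ zpow_mem (mem_adjoin_simple_self F α) m

theorem minpoly.natDegree_eq_finrank_of_orderOf_eq {F E : Type*} [Field F] [Field E]
    [Algebra F E] [Finite E] {α : E} (h : orderOf α = Nat.card E - 1) :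
    (minpoly F α).natDegree = Module.finrank F E := by
  rw [← adjoin.finrank (.of_finite F α), adjoin_simple_eq_top_of_orderOf_eq h, finrank_top']

namespace IsPrimitivePoly

variable {k : ℕ} {p : (ZMod 2)[X]}

theorem natDegree_eq (hk : k ≠ 0) (h : IsPrimitivePoly k p) : p.natDegree = k := by
  obtain ⟨α, hα, rfl⟩ := h
  rw [minpoly.natDegree_eq_finrank_of_orderOf_eq (by rwa [GaloisField.card 2 k hk]),
    GaloisField.finrank 2 hk]

theorem coeff_zero_ne_zero (hk : k ≠ 0) (h : IsPrimitivePoly k p) : p.coeff 0 ≠ 0 := by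
  obtain ⟨α, hα, rfl⟩ := h
  refine minpoly.coeff_zero_ne_zero (.of_finite _ α) fun h0 => ?_
  subst h0
  simp only [orderOf_zero] at hα
  have := Nat.one_lt_two_pow hk
  omega

theorem isCoprime {k' : ℕ} {q : (ZMod 2)[X]} (hp : IsPrimitivePoly k p)
    (hq : IsPrimitivePoly k' q) (hne : p ≠ q) : IsCoprime p q := by
  obtain ⟨α, -, rfl⟩ := hp
  obtain ⟨β, -, rfl⟩ := hq
  exact Monic.isCoprime_of_irreducible_of_ne (minpoly.monic (.of_finite _ α))
    (minpoly.monic (.of_finite _ β)) (minpoly.irreducible (.of_finite _ α))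
    (minpoly.irreducible (.of_finite _ β)) hne

end IsPrimitivePoly

theorem zero_mem_PRcode (k : ℕ) (p : (ZMod 2)[X]) (n : ℕ) :
    (0 : Fin n → ZMod 2) ∈ PRcode k p n := by
  intro j _
  simp

theorem coeff_mul_ofFn_rev_eq_zero_of_mem_PRcode {k n : ℕ} {p : (ZMod 2)[X]}
    (hp : p.natDegree ≤ k) {c : Fin n → ZMod 2} (hc : c ∈ PRcode k p n) {m : ℕ} (hkm : k ≤ m)
    (hmn : m < n) :
    (p * ofFn n (c ∘ Fin.rev)).coeff m = 0 := by
  rw [← hc (n - 1 - m) (by omega), coeff_mul, Finset.Nat.sum_antidiagonal_eq_sum_range_succ_mk,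
    ← Finset.sum_subset (Finset.range_subset_range.2 (by omega : k + 1 ≤ m + 1))]
  · refine Finset.sum_congr rfl fun i hi => ?_
    rw [Finset.mem_range] at hi
    rw [ofFn_coeff_eq_val_of_lt _ (by omega), dif_pos (by omega)]
    exact congrArg (p.coeff i * c ·) (Fin.ext (by simp only [Fin.val_rev]; omega))
  · intro i _ hi
    rw [Finset.mem_range] at hi
    rw [coeff_eq_zero_of_natDegree_lt (by omega), zero_mul]

theorem stmt1 (k1 k2 n : ℕ) (hk1 : 1 ≤ k1) (hk2 : 1 ≤ k2)
    (hn : 2 * max k1 k2 ≤ n)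
    (p1 p2 : Polynomial (ZMod 2))
    (h1 : IsPrimitivePoly k1 p1) (h2 : IsPrimitivePoly k2 p2) (hne : p1 ≠ p2) :
    PRcode k1 p1 n ∩ PRcode k2 p2 n = {0} := by
  have hdeg1 := h1.natDegree_eq (Nat.one_le_iff_ne_zero.1 hk1)
  have hdeg2 := h2.natDegree_eq (Nat.one_le_iff_ne_zero.1 hk2)
  refine Set.eq_singleton_iff_unique_mem.2
    ⟨⟨zero_mem_PRcode k1 p1 n, zero_mem_PRcode k2 p2 n⟩, fun c ⟨hc1, hc2⟩ => ?_⟩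
  have hrev : ofFn n (c ∘ Fin.rev) = 0 :=
    eq_zero_of_coeff_mul_eq_zero_of_isCoprime (h1.isCoprime h2 hne)
      (h1.coeff_zero_ne_zero (Nat.one_le_iff_ne_zero.1 hk1)) (by omega) (ofFn_degree_lt _)
      (fun m hm => coeff_mul_ofFn_rev_eq_zero_of_mem_PRcode hdeg1.le hc1 (hdeg1 ▸ hm))
      (fun m hm => coeff_mul_ofFn_rev_eq_zero_of_mem_PRcode hdeg2.le hc2 (hdeg2 ▸ hm))
  funext i
  simpa using congrFun ((injective_ofFn n) (hrev.trans (map_zero _).symm)) i.rev
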